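/- InfEx_≅ is strictly contained in InfEx_≈: every family of equivalence structures that is InfEx-learnable up to isomorphism is InfEx-learnable up to bi-embeddability, and there exists a family (namely {[5:ω], [5:ω,2:1]}) that is InfEx-learnable up to bi-embeddability but not up to isomorphism. -/

import Mathlib

/-!
Isomorphic structures are bi-embeddable, so a learner up to isomorphism is one up to
bi-embeddability; and `[5:ω]`, `[5:ω,2:1]` are bi-embeddable, so a constant learner learns the
pair up to bi-embeddability. Such comparisons go through the quotients: a bijection between the
sets of classes that preserves class sizes gives an isomorphism, an injection into classes that are
at least as large gives an embedding.

A learner for both structures up to isomorphism can be made to change its mind infinitely often on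
one copy of `[5:ω]`. Given a copy of `[5:ω]`, wait until the learner settles on a hypothesis;
beyond everything it has seen, open a class of size 2, giving a copy of `[5:ω,2:1]`; wait until it
settles on a hypothesis, necessarily a different one; beyond everything it has seen, complete that
class to size 5, giving a copy of `[5:ω]` again. The copies agree on longer and longer initial
segments, and their limit is a copy of `[5:ω]` on which the learner never converges.
-/
open Set

/-- An equivalence structure on ℕ. -/
structure EqStruct where
  rel : ℕ → ℕ → Prop
  equiv : Equivalence rel

namespace EqStruct

/-- Isomorphism of equivalence structures. -/
def Isom (A B : EqStruct) : Prop :=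
  ∃ f : ℕ → ℕ, Function.Bijective f ∧ ∀ x y, A.rel x y ↔ B.rel (f x) (f y)

/-- Embedding of equivalence structures. -/
def Embeds (A B : EqStruct) : Prop :=
  ∃ f : ℕ → ℕ, Function.Injective f ∧ ∀ x y, A.rel x y ↔ B.rel (f x) (f y)

/-- Bi-embeddability. -/
def Biembed (A B : EqStruct) : Prop := A.Embeds B ∧ B.Embeds A

/-- The equivalence class of `x`. -/
def classOf (A : EqStruct) (x : ℕ) : Set ℕ := {y | A.rel x y}

/-- The number of equivalence classes of size `k` (counted in `ℕ∞`). -/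
noncomputable def numClasses (A : EqStruct) (k : ℕ∞) : ℕ∞ :=
  {C : Set ℕ | (∃ x, C = A.classOf x) ∧ C.encard = k}.encard

/-- `A` finitely embeds into `B`: every finite substructure `A[s]` embeds into `B`. -/
def FinEmbeds (A B : EqStruct) : Prop :=
  ∀ s : ℕ, ∃ f : ℕ → ℕ, Set.InjOn f (Set.Iio s) ∧
    ∀ x < s, ∀ y < s, (A.rel x y ↔ B.rel (f x) (f y))

end EqStruct

/-- An informant for a structure: lists every pair, labelled correctly. -/
def IsInformant (A : EqStruct) (I : ℕ → (ℕ × ℕ) × Bool) : Prop :=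
  (∀ p : ℕ × ℕ, ∃ n, (I n).1 = p) ∧
  (∀ n, ((I n).2 = true ↔ A.rel (I n).1.1 (I n).1.2))

/-- A learner from informants: `none` is the `?` symbol. -/
abbrev Learner := List ((ℕ × ℕ) × Bool) → Option ℕ

/-- The initial segment `I[n]`. -/
def seg (I : ℕ → (ℕ × ℕ) × Bool) (n : ℕ) : List ((ℕ × ℕ) × Bool) :=
  (List.range n).map I

/-- `M` InfEx-learns `A` up to `sim`, with hypotheses indices into `Me`. -/
def InfExLearns (Me : ℕ → EqStruct) (sim : EqStruct → EqStruct → Prop)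
    (M : Learner) (A : EqStruct) : Prop :=
  ∀ B, B.Isom A → ∀ I, IsInformant B I →
    ∃ e, sim (Me e) B ∧ ∃ N, ∀ n ≥ N, M (seg I n) = some e

/-- `M` finitely learns `A` from informants up to `sim`. -/
def InfFinLearns (Me : ℕ → EqStruct) (sim : EqStruct → EqStruct → Prop)
    (M : Learner) (A : EqStruct) : Prop :=
  ∀ B, B.Isom A → ∀ I, IsInformant B I →
    ∃ e, sim (Me e) B ∧ (∃ n, M (seg I n) = some e) ∧
      ∀ n e', M (seg I n) = some e' → e' = e

/-- A text for a structure: enumerates exactly the related pairs (`none` is pause). -/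
def IsText (A : EqStruct) (T : ℕ → Option (ℕ × ℕ)) : Prop :=
  ∀ x y, A.rel x y ↔ ∃ n, T n = some (x, y)

/-- A learner from texts. -/
abbrev TxtLearner := List (Option (ℕ × ℕ)) → Option ℕ

/-- The initial segment `T[n]` of a text. -/
def tseg (T : ℕ → Option (ℕ × ℕ)) (n : ℕ) : List (Option (ℕ × ℕ)) :=
  (List.range n).map T

/-- `M` TxtEx-learns `A` up to `sim`. -/
def TxtExLearns (Me : ℕ → EqStruct) (sim : EqStruct → EqStruct → Prop)
    (M : TxtLearner) (A : EqStruct) : Prop :=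
  ∀ B, B.Isom A → ∀ T, IsText B T →
    ∃ e, sim (Me e) B ∧ ∃ N, ∀ n ≥ N, M (tseg T n) = some e

/-- `σ` describes a finite part of `A`: it is an initial segment of an informant for `A`. -/
def DescribesPart (A : EqStruct) (σ : List ((ℕ × ℕ) × Bool)) : Prop :=
  ∃ I, IsInformant A I ∧ σ = seg I σ.length


open Function Cardinal

namespace EqStruct

variable {X Y Z : EqStruct}

theorem Isom.symm (h : X.Isom Y) : Y.Isom X := by
  obtain ⟨f, hf, hrel⟩ := h
  let e := Equiv.ofBijective f hf
  refine ⟨e.symm, e.symm.bijective, fun x y => ?_⟩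
  rw [hrel, show f (e.symm x) = x from e.apply_symm_apply x,
    show f (e.symm y) = y from e.apply_symm_apply y]

theorem Isom.trans (h : X.Isom Y) (h' : Y.Isom Z) : X.Isom Z := by
  obtain ⟨f, hf, hrel⟩ := h
  obtain ⟨g, hg, hrel'⟩ := h'
  exact ⟨g ∘ f, hg.comp hf, fun x y => (hrel x y).trans (hrel' (f x) (f y))⟩

theorem Isom.embeds (h : X.Isom Y) : X.Embeds Y :=
  let ⟨f, hf, hrel⟩ := h
  ⟨f, hf.injective, hrel⟩

theorem Embeds.trans (h : X.Embeds Y) (h' : Y.Embeds Z) : X.Embeds Z := by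
  obtain ⟨f, hf, hrel⟩ := h
  obtain ⟨g, hg, hrel'⟩ := h'
  exact ⟨g ∘ f, hg.comp hf, fun x y => (hrel x y).trans (hrel' (f x) (f y))⟩

theorem Isom.biembed (h : X.Isom Y) : X.Biembed Y := ⟨h.embeds, h.symm.embeds⟩

theorem Biembed.trans (h : X.Biembed Y) (h' : Y.Biembed Z) : X.Biembed Z :=
  ⟨h.1.trans h'.1, h'.2.trans h.2⟩

theorem Isom.exists_encard_classOf_eq (h : X.Isom Y) (y : ℕ) :
    ∃ x, (X.classOf x).encard = (Y.classOf y).encard := by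
  obtain ⟨f, hf, hrel⟩ := h
  obtain ⟨x, rfl⟩ := hf.surjective y
  have himage : f '' X.classOf x = Y.classOf (f x) := by
    ext z
    obtain ⟨y, rfl⟩ := hf.surjective z
    simp only [mem_image, hf.injective.eq_iff, exists_eq_right]
    exact hrel x y
  exact ⟨x, by rw [← himage, hf.injective.injOn.encard_image]⟩

def setoid (X : EqStruct) : Setoid ℕ := ⟨X.rel, X.equiv⟩

abbrev Classes (X : EqStruct) : Type := Quotient X.setoid

abbrev Fibre (X : EqStruct) (q : X.Classes) : Type := {x : ℕ // Quotient.mk X.setoid x = q}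

theorem mk_eq_mk_iff {x y : ℕ} :
    Quotient.mk X.setoid x = Quotient.mk X.setoid y ↔ X.rel x y := Quotient.eq

noncomputable def classwiseMap (Φ : X.Classes → Y.Classes) (ψ : ∀ q, X.Fibre q → Y.Fibre (Φ q)) :
    ℕ → ℕ :=
  Equiv.sigmaFiberEquiv _ ∘ Sigma.map Φ ψ ∘ (Equiv.sigmaFiberEquiv _).symm

theorem mk_classwiseMap (Φ : X.Classes → Y.Classes) (ψ : ∀ q, X.Fibre q → Y.Fibre (Φ q)) (x : ℕ) :
    Quotient.mk Y.setoid (classwiseMap Φ ψ x) = Φ (Quotient.mk X.setoid x) :=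
  (ψ _ _).2

theorem rel_iff_rel_classwiseMap {Φ : X.Classes → Y.Classes} (hΦ : Injective Φ)
    (ψ : ∀ q, X.Fibre q → Y.Fibre (Φ q)) (x y : ℕ) :
    X.rel x y ↔ Y.rel (classwiseMap Φ ψ x) (classwiseMap Φ ψ y) := by
  rw [← mk_eq_mk_iff, ← mk_eq_mk_iff, mk_classwiseMap, mk_classwiseMap, hΦ.eq_iff]

theorem embeds_of_classes (Φ : X.Classes ↪ Y.Classes) (h : ∀ q, #(X.Fibre q) ≤ #(Y.Fibre (Φ q))) :
    X.Embeds Y := by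
  let ψ q : X.Fibre q ↪ Y.Fibre (Φ q) := ((Cardinal.le_def _ _).1 (h q)).some
  refine ⟨classwiseMap Φ fun q => ψ q, ?_, rel_iff_rel_classwiseMap Φ.injective _⟩
  exact (Equiv.injective _).comp
    ((Φ.injective.sigma_map fun q => (ψ q).injective).comp (Equiv.injective _))

theorem isom_of_classes (Φ : X.Classes ≃ Y.Classes) (h : ∀ q, #(X.Fibre q) = #(Y.Fibre (Φ q))) :
    X.Isom Y := by
  let ψ q : X.Fibre q ≃ Y.Fibre (Φ q) := (Cardinal.eq.1 (h q)).some
  refine ⟨classwiseMap Φ fun q => ψ q, ?_, rel_iff_rel_classwiseMap Φ.injective _⟩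
  have hσ : Bijective (Sigma.map Φ fun q => ψ q) :=
    ⟨Φ.injective.sigma_map fun q => (ψ q).injective,
      Φ.surjective.sigma_map fun q => (ψ q).surjective⟩
  exact (Equiv.bijective _).comp (hσ.comp (Equiv.bijective _))

theorem mk_fibre_mk (x : ℕ) : #(X.Fibre (Quotient.mk _ x)) = #(X.classOf x) :=
  Cardinal.mk_congr <| Equiv.subtypeEquivRight fun _ =>
    mk_eq_mk_iff.trans ⟨X.equiv.symm, X.equiv.symm⟩

theorem infinite_classes (h : ∀ x, (X.classOf x).Finite) : Infinite X.Classes := by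
  by_contra hfin
  rw [not_infinite_iff_finite] at hfin
  have (q : X.Classes) : Finite (X.Fibre q) := by
    induction q using Quotient.inductionOn with
    | h x => exact Cardinal.mk_lt_aleph0_iff.1 (mk_fibre_mk x ▸ (h x).lt_aleph0)
  have := Finite.of_equiv _ (Equiv.sigmaFiberEquiv (Quotient.mk X.setoid))
  exact not_finite ℕ

variable {j k : ℕ}

def UniformClasses (X : EqStruct) (k : ℕ) : Prop := ∀ x, (X.classOf x).encard = k

def UniformClassesButOne (X : EqStruct) (j k : ℕ) : Prop :=
  ∃ a, (X.classOf a).encard = j ∧ ∀ x, ¬ X.rel x a → (X.classOf x).encard = k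

theorem classOf_eq_of_rel {x y : ℕ} (h : X.rel x y) : X.classOf x = X.classOf y :=
  Set.ext fun _ => ⟨X.equiv.trans (X.equiv.symm h), X.equiv.trans h⟩

theorem mk_fibre_mk_of_encard {x : ℕ} {n : ℕ} (h : (X.classOf x).encard = n) :
    #(X.Fibre (Quotient.mk _ x)) = n :=
  (mk_fibre_mk x).trans (Cardinal.toENat_eq_natCast.1 h)

theorem UniformClasses.mk_fibre (h : X.UniformClasses k) (q : X.Classes) : #(X.Fibre q) = k := by
  induction q using Quotient.inductionOn with
  | h x => exact mk_fibre_mk_of_encard (h x)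

theorem UniformClasses.infinite (h : X.UniformClasses k) : Infinite X.Classes :=
  infinite_classes fun x => finite_of_encard_eq_coe (h x)

theorem UniformClasses.isom (hX : X.UniformClasses k) (hY : Y.UniformClasses k) : X.Isom Y :=
  have := hX.infinite
  have := hY.infinite
  isom_of_classes nonempty_equiv_of_countable.some fun q => by rw [hX.mk_fibre, hY.mk_fibre]

theorem mk_fibre_of_ne {a : ℕ} (h : ∀ x, ¬ X.rel x a → (X.classOf x).encard = k) {q : X.Classes}
    (hq : q ≠ Quotient.mk _ a) : #(X.Fibre q) = k := by
  induction q using Quotient.inductionOn with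
  | h x => exact mk_fibre_mk_of_encard (h x fun hxa => hq (mk_eq_mk_iff.2 hxa))

theorem UniformClassesButOne.infinite (h : X.UniformClassesButOne j k) : Infinite X.Classes := by
  obtain ⟨a, ha, hXa⟩ := h
  refine infinite_classes fun x => ?_
  by_cases hxa : X.rel x a
  · exact classOf_eq_of_rel hxa ▸ finite_of_encard_eq_coe ha
  · exact finite_of_encard_eq_coe (hXa x hxa)

theorem infinite_classes_ne [Infinite X.Classes] (a : ℕ) :
    Infinite {q : X.Classes // q ≠ Quotient.mk _ a} :=
  (finite_singleton _).infinite_compl.to_subtype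

theorem UniformClassesButOne.isom (hX : X.UniformClassesButOne j k)
    (hY : Y.UniformClassesButOne j k) : X.Isom Y := by
  classical
  have := hX.infinite
  have := hY.infinite
  obtain ⟨a, ha, hXa⟩ := hX
  obtain ⟨b, hb, hYb⟩ := hY
  have := infinite_classes_ne (X := X) a
  have := infinite_classes_ne (X := Y) b
  let e : {q : X.Classes // q ≠ Quotient.mk _ a} ≃ {q : Y.Classes // q ≠ Quotient.mk _ b} :=
    nonempty_equiv_of_countable.some
  refine isom_of_classes ((Equiv.optionSubtypeNe _).symm.trans
    (e.optionCongr.trans (Equiv.optionSubtypeNe _))) fun q => ?_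
  by_cases hq : q = Quotient.mk _ a
  · subst hq
    simp only [Equiv.trans_apply, Equiv.optionSubtypeNe_symm_self, Equiv.optionCongr_apply,
      Option.map_none, Equiv.optionSubtypeNe_none]
    rw [mk_fibre_mk_of_encard ha, mk_fibre_mk_of_encard hb]
  · simp only [Equiv.trans_apply, Equiv.optionSubtypeNe_symm_of_ne hq, Equiv.optionCongr_apply,
      Option.map_some, Equiv.optionSubtypeNe_some]
    rw [mk_fibre_of_ne hXa hq, mk_fibre_of_ne hYb (e ⟨q, hq⟩).2]

theorem UniformClasses.embeds_of_butOne (hX : X.UniformClasses k)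
    (hY : Y.UniformClassesButOne j k) : X.Embeds Y := by
  have := hX.infinite
  have := hY.infinite
  obtain ⟨b, -, hYb⟩ := hY
  have := infinite_classes_ne (X := Y) b
  let e : X.Classes ≃ {q : Y.Classes // q ≠ Quotient.mk _ b} := nonempty_equiv_of_countable.some
  refine embeds_of_classes (e.toEmbedding.trans (Embedding.subtype _)) fun q => ?_
  rw [hX.mk_fibre]
  exact (mk_fibre_of_ne hYb (e q).2).ge

theorem UniformClassesButOne.embeds_of_uniform (hX : X.UniformClassesButOne j k) (hjk : j ≤ k)
    (hY : Y.UniformClasses k) : X.Embeds Y := by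
  have := hX.infinite
  have := hY.infinite
  obtain ⟨a, ha, hXa⟩ := hX
  refine embeds_of_classes nonempty_equiv_of_countable.some.toEmbedding fun q => ?_
  rw [hY.mk_fibre]
  by_cases hq : q = Quotient.mk _ a
  · subst hq
    rw [mk_fibre_mk_of_encard ha]
    exact_mod_cast hjk
  · rw [mk_fibre_of_ne hXa hq]

theorem UniformClasses.not_isom (hX : X.UniformClasses k) (hY : Y.UniformClassesButOne j k)
    (hjk : j ≠ k) : ¬ X.Isom Y := by
  intro h
  obtain ⟨a, ha, -⟩ := hY
  obtain ⟨x, hx⟩ := h.exists_encard_classOf_eq a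
  rw [hX x, ha] at hx
  exact hjk (by exact_mod_cast hx.symm)

end EqStruct

section Colouring

open EqStruct

def ofColouring (c : ℕ → ℕ) : EqStruct := ⟨fun x y => c x = c y, ⟨fun _ => rfl, Eq.symm, Eq.trans⟩⟩

def colouringInformant (c : ℕ → ℕ) (n : ℕ) : (ℕ × ℕ) × Bool :=
  (Nat.unpair n, decide (c (Nat.unpair n).1 = c (Nat.unpair n).2))

theorem isInformant_colouringInformant (c : ℕ → ℕ) :
    IsInformant (ofColouring c) (colouringInformant c) :=
  ⟨fun p => ⟨Nat.pair p.1 p.2, by simp [colouringInformant]⟩,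
    fun n => by simp [colouringInformant, ofColouring]⟩

theorem seg_colouringInformant_congr {c d : ℕ → ℕ} {n : ℕ} (h : ∀ x < n, c x = d x) :
    seg (colouringInformant c) n = seg (colouringInformant d) n := by
  refine List.map_congr_left fun i hi => ?_
  have hi : i < n := List.mem_range.1 hi
  simp only [colouringInformant, h _ ((Nat.unpair_left_le i).trans_lt hi),
    h _ ((Nat.unpair_right_le i).trans_lt hi)]

/-- `[0, m)` is a union of classes of `ofColouring c`, all coloured below `m`. -/
def IsCut (c : ℕ → ℕ) (m : ℕ) : Prop := ∀ x, x < m ↔ c x < m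

variable {c d : ℕ → ℕ} {m p : ℕ}

theorem IsCut.of_eq_below (hc : IsCut c m) (hd : IsCut d p) (hmp : m ≤ p) (h : ∀ x < p, d x = c x) :
    IsCut d m := by
  intro x
  by_cases hx : x < p
  · rw [h x hx, hc x]
  · have := (hd x).not.1 hx
    omega

theorem IsCut.classOf_eq (hc : IsCut c m) (hd : IsCut d m) (h : ∀ x < m, d x = c x) {x : ℕ}
    (hx : x < m) : (ofColouring d).classOf x = (ofColouring c).classOf x := by
  ext y
  by_cases hy : y < m
  · change d x = d y ↔ c x = c y
    rw [h x hx, h y hy]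
  · have := (hc y).not.1 hy
    have := (hd y).not.1 hy
    have := (hc x).1 hx
    have := (hd x).1 hx
    change d x = d y ↔ c x = c y
    omega

theorem IsCut.classOf_eq_of_le (hc : IsCut c m) {x : ℕ} (hx : m ≤ x) :
    (ofColouring c).classOf x = {y | m ≤ y ∧ c x = c y} := by
  ext y
  have := (hc x).not.1 (by omega)
  have := hc y
  change c x = c y ↔ _
  constructor
  · intro h; exact ⟨by omega, h⟩
  · exact And.right

theorem exists_limit_of_isCut (c : ℕ → ℕ → ℕ) (m : ℕ → ℕ) (hm : StrictMono m)
    (hcut : ∀ j, IsCut (c j) (m j)) (hcut_succ : ∀ j, IsCut (c (j + 1)) (m j))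
    (heq : ∀ j, ∀ x < m j, c (j + 1) x = c j x) :
    ∃ L : ℕ → ℕ, ∀ j, IsCut L (m j) ∧ ∀ x < m j, L x = c j x := by
  have hstable : ∀ j k, j ≤ k → IsCut (c k) (m j) ∧ ∀ x < m j, c k x = c j x := by
    intro j k hjk
    induction k, hjk using Nat.le_induction with
    | base => exact ⟨hcut j, fun _ _ => rfl⟩
    | succ k hjk ih =>
      refine ⟨ih.1.of_eq_below (hcut_succ k) (hm.monotone hjk) (heq k), fun x hx => ?_⟩
      rw [heq k x (hx.trans_le (hm.monotone hjk)), ih.2 x hx]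
  have hlt (x : ℕ) : x < m (x + 1) := (hm.id_le (x + 1)).trans_lt' (Nat.lt_succ_self x)
  refine ⟨fun x => c (x + 1) x, fun j => ⟨fun x => ?_, fun x hx => ?_⟩⟩
  · rcases le_or_gt j (x + 1) with hj | hj
    · exact (hstable j (x + 1) hj).1 x
    · change x < m j ↔ c (x + 1) x < m j
      rw [← (hstable (x + 1) j hj.le).2 x (hlt x)]
      exact hcut j x
  · rcases le_or_gt j (x + 1) with hj | hj
    · exact (hstable j (x + 1) hj).2 x hx
    · exact ((hstable (x + 1) j hj.le).2 x (hlt x)).symm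

end Colouring

section Diagonal

def IsMindChangeExtension (M : Learner) (c : ℕ → ℕ) (m : ℕ) (c' : ℕ → ℕ) (m' : ℕ) : Prop :=
  m < m' ∧ IsCut c' m ∧ (∀ x < m, c' x = c x) ∧
    ∃ n₁ n₂, m ≤ n₁ ∧ m ≤ n₂ ∧ n₁ ≤ m' ∧ n₂ ≤ m' ∧
      M (seg (colouringInformant c') n₁) ≠ M (seg (colouringInformant c') n₂)

theorem exists_colouring_not_converges {M : Learner} (P : (ℕ → ℕ) → ℕ → Prop)
    (hP : ∀ c m, P c m → IsCut c m) {c₀ : ℕ → ℕ} {m₀ : ℕ} (h₀ : P c₀ m₀)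
    (hstep : ∀ c m, P c m → ∃ c' m', P c' m' ∧ IsMindChangeExtension M c m c' m') :
    ∃ L : ℕ → ℕ,
      (∀ x, ∃ c m, P c m ∧ (ofColouring L).classOf x = (ofColouring c).classOf x) ∧
      ∀ e N, ∃ n ≥ N, M (seg (colouringInformant L) n) ≠ some e := by
  let S := {s : (ℕ → ℕ) × ℕ // P s.1 s.2}
  have hstep' (s : S) : ∃ t : S, IsMindChangeExtension M s.1.1 s.1.2 t.1.1 t.1.2 :=
    let ⟨c', m', hP', h⟩ := hstep _ _ s.2
    ⟨⟨(c', m'), hP'⟩, h⟩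
  choose next hnext using hstep'
  let s (j : ℕ) : S := next^[j] ⟨(c₀, m₀), h₀⟩
  have hnext' (j : ℕ) : IsMindChangeExtension M (s j).1.1 (s j).1.2 (s (j + 1)).1.1
      (s (j + 1)).1.2 := by
    simp only [s, Function.iterate_succ_apply']
    exact hnext _
  have hm : StrictMono fun j => (s j).1.2 := strictMono_nat_of_lt_succ fun j => (hnext' j).1
  obtain ⟨L, hL⟩ := exists_limit_of_isCut (fun j => (s j).1.1) (fun j => (s j).1.2) hm
    (fun j => hP _ _ (s j).2) (fun j => (hnext' j).2.1) (fun j => (hnext' j).2.2.1)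
  have hlt (x : ℕ) : x < (s (x + 1)).1.2 := (hm.id_le (x + 1)).trans_lt' (Nat.lt_succ_self x)
  refine ⟨L, fun x => ⟨_, _, (s (x + 1)).2,
    (hP _ _ (s (x + 1)).2).classOf_eq (hL (x + 1)).1 (hL (x + 1)).2 (hlt x)⟩, fun e N => ?_⟩
  obtain ⟨-, -, -, n₁, n₂, h₁, h₂, h₁', h₂', hne⟩ := hnext' N
  have hseg {n} (hn : n ≤ (s (N + 1)).1.2) :
      seg (colouringInformant L) n = seg (colouringInformant (s (N + 1)).1.1) n :=
    seg_colouringInformant_congr fun x hx => (hL (N + 1)).2 x (hx.trans_le hn)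
  by_contra! h
  have hN : N ≤ (s N).1.2 := hm.id_le N
  exact hne (by rw [← hseg h₁', ← hseg h₂', h n₁ (by omega), h n₂ (by omega)])

end Diagonal

section FiveBlocks

open EqStruct

variable {c : ℕ → ℕ} {m p k x : ℕ}

theorem encard_Ico_add (a n : ℕ) : (Ico a (a + n)).encard = n := by
  rw [← (finite_Ico a (a + n)).cast_ncard_eq, ncard_Ico_nat, Nat.add_sub_cancel_left]

def IsStandardAbove (c : ℕ → ℕ) (m : ℕ) : Prop :=
  5 ∣ m ∧ IsCut c m ∧ ∀ x, m ≤ x → c x = 5 * (x / 5)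

theorem IsStandardAbove.isCut (h : IsStandardAbove c m) (hmp : m ≤ p) (hp : 5 ∣ p) :
    IsCut c p := by
  obtain ⟨hm, hcut, htail⟩ := h
  intro x
  by_cases hx : x < m
  · have := (hcut x).1 hx
    omega
  · rw [htail x (by omega)]
    omega

theorem IsStandardAbove.encard_classOf (h : IsStandardAbove c m) (hx : m ≤ x) :
    ((ofColouring c).classOf x).encard = 5 := by
  obtain ⟨hm, hcut, htail⟩ := h
  have : {y | m ≤ y ∧ c x = c y} = Ico (5 * (x / 5)) (5 * (x / 5) + 5) := by
    ext y
    simp only [mem_ofPred_eq, mem_Ico]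
    rw [htail x hx]
    constructor
    · rintro ⟨hy, hxy⟩
      rw [htail y hy] at hxy
      omega
    · intro hy
      refine ⟨by omega, ?_⟩
      rw [htail y (by omega)]
      omega
  rw [hcut.classOf_eq_of_le hx, this, encard_Ico_add]
  rfl

def openPair (c : ℕ → ℕ) (p x : ℕ) : ℕ :=
  if x < p then c x else if x < p + 2 then p else p + 2 + 5 * ((x - (p + 2)) / 5)

/-- Completes the class `{p, p + 1}` of `openPair c p` by `q, q + 1, q + 2`, where
`q = p + 2 + 5 * k`; from `q + 3`, a multiple of 5 when `p` is, the blocks are aligned again. -/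
def closePair (c : ℕ → ℕ) (p k x : ℕ) : ℕ :=
  if x < p + 2 + 5 * k then openPair c p x else if x < p + 5 * k + 5 then p else 5 * (x / 5)

theorem isCut_openPair (hc : IsCut c p) : IsCut (openPair c p) p := by
  intro x
  have := hc x
  unfold openPair
  split_ifs <;> omega

theorem uniformClassesButOne_openPair (hc : IsCut c p) (hu : (ofColouring c).UniformClasses 5) :
    (ofColouring (openPair c p)).UniformClassesButOne 2 5 := by
  have hd := isCut_openPair hc
  refine ⟨p, ?_, fun x hx => ?_⟩
  · have : {y | p ≤ y ∧ openPair c p p = openPair c p y} = Ico p (p + 2) := by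
      ext y
      simp only [openPair, mem_ofPred_eq, mem_Ico]
      split_ifs <;> omega
    rw [hd.classOf_eq_of_le le_rfl, this, encard_Ico_add]
  by_cases hxp : x < p
  · rw [hc.classOf_eq hd (fun y hy => if_pos hy) hxp]
    exact hu x
  have hx : p + 2 ≤ x := by
    change ¬ openPair c p x = openPair c p p at hx
    unfold openPair at hx
    split_ifs at hx <;> omega
  set b := p + 2 + 5 * ((x - (p + 2)) / 5)
  have : {y | p ≤ y ∧ openPair c p x = openPair c p y} = Ico b (b + 5) := by
    ext y
    simp only [openPair, mem_ofPred_eq, mem_Ico, b]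
    split_ifs <;> omega
  rw [hd.classOf_eq_of_le (by omega), this, encard_Ico_add]

theorem closePair_of_lt (hx : x < p) : closePair c p k x = c x := by
  rw [closePair, if_pos (by omega), openPair, if_pos hx]

theorem closePair_of_lt_add (hx : x < p + 2 + 5 * k) : closePair c p k x = openPair c p x :=
  if_pos hx

theorem isCut_closePair (hc : IsCut c p) : IsCut (closePair c p k) p := by
  intro x
  have := hc x
  unfold closePair openPair
  split_ifs <;> omega

theorem isStandardAbove_closePair (hp : 5 ∣ p) (hc : IsCut c p) :
    IsStandardAbove (closePair c p k) (p + 5 * k + 5) := by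
  refine ⟨by omega, fun x => ?_, fun x hx => ?_⟩
  · have := hc x
    unfold closePair openPair
    split_ifs <;> omega
  · rw [closePair, if_neg (by omega), if_neg (by omega)]

theorem uniformClasses_closePair (hp : 5 ∣ p) (hc : IsCut c p)
    (hu : (ofColouring c).UniformClasses 5) : (ofColouring (closePair c p k)).UniformClasses 5 := by
  intro x
  have hd := isCut_closePair (k := k) hc
  by_cases hxp : x < p
  · rw [hc.classOf_eq hd (fun y hy => closePair_of_lt hy) hxp]
    exact hu x
  by_cases hxq : p + 5 * k + 5 ≤ x
  · exact (isStandardAbove_closePair hp hc).encard_classOf hxq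
  rw [hd.classOf_eq_of_le (by omega)]
  by_cases hxb : p + 2 ≤ x ∧ x < p + 2 + 5 * k
  · set b := p + 2 + 5 * ((x - (p + 2)) / 5)
    have : {y | p ≤ y ∧ closePair c p k x = closePair c p k y} = Ico b (b + 5) := by
      ext y
      simp only [closePair, openPair, mem_ofPred_eq, mem_Ico, b]
      split_ifs <;> omega
    rw [this, encard_Ico_add]
  · have : {y | p ≤ y ∧ closePair c p k x = closePair c p k y} =
        Ico p (p + 2) ∪ Ico (p + 2 + 5 * k) (p + 2 + 5 * k + 3) := by
      ext y
      simp only [closePair, openPair, mem_ofPred_eq, mem_union, mem_Ico]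
      split_ifs <;> omega
    have hdisj : Disjoint (Ico p (p + 2)) (Ico (p + 2 + 5 * k) (p + 2 + 5 * k + 3)) :=
      disjoint_left.2 fun y h₁ h₂ => by simp only [mem_Ico] at h₁ h₂; omega
    rw [this, encard_union_eq hdisj, encard_Ico_add, encard_Ico_add]
    rfl

end FiveBlocks

section Learning

open EqStruct

variable {Me : ℕ → EqStruct} {M : Learner} {A B : EqStruct}

theorem InfExLearns.mono {R S : EqStruct → EqStruct → Prop} (hRS : ∀ X Y, R X Y → S X Y)
    {C : EqStruct} (h : InfExLearns Me R M C) : InfExLearns Me S M C := fun B hB I hI =>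
  let ⟨e, he, hconv⟩ := h B hB I hI
  ⟨e, hRS _ _ he, hconv⟩

theorem infExLearns_const {sim : EqStruct → EqStruct → Prop} {e : ℕ} {C : EqStruct}
    (h : ∀ B, B.Isom C → sim (Me e) B) : InfExLearns Me sim (fun _ => some e) C :=
  fun B hB _ _ => ⟨e, h B hB, 0, fun _ _ => rfl⟩

theorem exists_mindChangeExtension (hA : A.UniformClasses 5) (hB : B.UniformClassesButOne 2 5)
    (hMA : InfExLearns Me Isom M A) (hMB : InfExLearns Me Isom M B) {c : ℕ → ℕ} {m : ℕ}
    (hc : IsStandardAbove c m) (hu : (ofColouring c).UniformClasses 5) :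
    ∃ c' m', (IsStandardAbove c' m' ∧ (ofColouring c').UniformClasses 5) ∧
      IsMindChangeExtension M c m c' m' := by
  obtain ⟨e₁, he₁, N₁, hN₁⟩ := hMA _ (hu.isom hA) _ (isInformant_colouringInformant c)
  set p := 5 * (m + N₁)
  have hp : 5 ∣ p := dvd_mul_right 5 _
  have hcp : IsCut c p := hc.isCut (by omega) hp
  have hpair := uniformClassesButOne_openPair hcp hu
  obtain ⟨e₂, he₂, N₂, hN₂⟩ :=
    hMB _ (hpair.isom hB) _ (isInformant_colouringInformant (openPair c p))
  refine ⟨closePair c p N₂, p + 5 * N₂ + 5,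
    ⟨isStandardAbove_closePair hp hcp, uniformClasses_closePair hp hcp hu⟩, by omega,
    hc.2.1.of_eq_below (isCut_closePair hcp) (by omega) fun x hx => closePair_of_lt hx,
    fun x hx => closePair_of_lt (by omega),
    p, p + 2 + 5 * N₂, by omega, by omega, by omega, by omega, ?_⟩
  rw [seg_colouringInformant_congr fun x hx => closePair_of_lt hx, hN₁ p (by omega),
    seg_colouringInformant_congr fun x hx => closePair_of_lt_add hx, hN₂ _ (by omega)]
  intro he
  cases Option.some_inj.1 he
  exact hA.not_isom hB (by norm_num)
    ((hu.isom hA).symm.trans (he₁.symm.trans (he₂.trans (hpair.isom hB))))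

theorem not_infExLearns_isom_uniform_and_butOne (hA : A.UniformClasses 5)
    (hB : B.UniformClassesButOne 2 5) :
    ¬ (InfExLearns Me Isom M A ∧ InfExLearns Me Isom M B) := by
  rintro ⟨hMA, hMB⟩
  have hblocks : IsStandardAbove (fun x => 5 * (x / 5)) 0 :=
    ⟨dvd_zero 5, fun x => by omega, fun _ _ => rfl⟩
  obtain ⟨L, hLclasses, hL⟩ := exists_colouring_not_converges
    (fun c m => IsStandardAbove c m ∧ (ofColouring c).UniformClasses 5) (fun _ _ h => h.1.2.1)
    ⟨hblocks, fun x => hblocks.encard_classOf (Nat.zero_le x)⟩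
    fun _ _ h => exists_mindChangeExtension hA hB hMA hMB h.1 h.2
  have hLu : (ofColouring L).UniformClasses 5 := fun x => by
    obtain ⟨c, m, ⟨-, hu⟩, hx⟩ := hLclasses x
    rw [hx]
    exact hu x
  obtain ⟨e, -, N, hN⟩ := hMA _ (hLu.isom hA) _ (isInformant_colouringInformant L)
  obtain ⟨n, hn, hne⟩ := hL e N
  exact hne (hN n hn)

end Learning

/-- InfEx up to isomorphism is strictly contained in InfEx up to
bi-embeddability; `{[5:ω], [5:ω,2:1]}` witnesses the strictness. -/
theorem stmt10 (Me : ℕ → EqStruct) (A B : EqStruct)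
    (hA : ∀ x, (A.classOf x).encard = 5)
    (hB : ∃ a, (B.classOf a).encard = 2 ∧ ∀ x, ¬ B.rel x a → (B.classOf x).encard = 5)
    (he : ∃ e, (Me e).Isom A) :
    (∀ 𝔄 : Set EqStruct, (∃ M : Learner, ∀ C ∈ 𝔄, InfExLearns Me EqStruct.Isom M C) →
      ∃ M : Learner, ∀ C ∈ 𝔄, InfExLearns Me EqStruct.Biembed M C) ∧
    (∃ 𝔄 : Set EqStruct,
      (∃ M : Learner, ∀ C ∈ 𝔄, InfExLearns Me EqStruct.Biembed M C) ∧
      ¬ ∃ M : Learner, ∀ C ∈ 𝔄, InfExLearns Me EqStruct.Isom M C) := by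
  refine ⟨fun 𝔄 ⟨M, hM⟩ => ⟨M, fun C hC => (hM C hC).mono fun _ _ h => h.biembed⟩,
    {A, B}, ?_, fun ⟨M, hM⟩ => not_infExLearns_isom_uniform_and_butOne (Me := Me) hA hB
      ⟨hM A (by simp), hM B (by simp)⟩⟩
  obtain ⟨e, he⟩ := he
  have hAB : A.Biembed B := ⟨EqStruct.UniformClasses.embeds_of_butOne hA hB,
    EqStruct.UniformClassesButOne.embeds_of_uniform hB (by norm_num) hA⟩
  refine ⟨fun _ => some e, fun C hC => infExLearns_const fun B' hB' => ?_⟩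
  rcases hC with rfl | rfl
  · exact (he.trans hB'.symm).biembed
  · exact (he.biembed.trans hAB).trans hB'.symm.biembed
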